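/- Every proper sequence $(a_n)$ in a semigroup has a sumsequence $(b_n)$ such that $b_F \neq b_G$ for all disjoint finite nonempty index sets $F$ and $G$. -/

import Mathlib

/-- The ordered sum `a_{i_1} + ⋯ + a_{i_m}` over a finite index set
`F = {i_1 < ⋯ < i_m}` (junk value `a 0` if `F = ∅`). -/
def ordsum {S : Type*} [AddSemigroup S] (a : ℕ → S) (F : Finset ℕ) : S :=
  match F.sort (· ≤ ·) with
  | [] => a 0
  | i :: l => l.foldl (fun s j => s + a j) (a i)

/-- `F < G`: every element of `F` is smaller than every element of `G`. -/
def FinsetLT (F G : Finset ℕ) : Prop := ∀ i ∈ F, ∀ j ∈ G, i < j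

/-- `FS(a_1, a_2, …)`: the set of all finite ordered sums of the sequence `a`. -/
def FSset {S : Type*} [AddSemigroup S] (a : ℕ → S) : Set S :=
  {s | ∃ F : Finset ℕ, F.Nonempty ∧ ordsum a F = s}

/-- `FS(a_n, a_{n+1}, …)`: finite ordered sums with all indices `≥ n`. -/
def FStail {S : Type*} [AddSemigroup S] (a : ℕ → S) (n : ℕ) : Set S :=
  {s | ∃ F : Finset ℕ, F.Nonempty ∧ (∀ i ∈ F, n ≤ i) ∧ ordsum a F = s}

/-- A sequence is proper if `a_{F₁} ≠ a_{F₂}` whenever `F₁ < F₂`. -/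
def IsProperSeq {S : Type*} [AddSemigroup S] (a : ℕ → S) : Prop :=
  ∀ F G : Finset ℕ, F.Nonempty → G.Nonempty → FinsetLT F G →
    ordsum a F ≠ ordsum a G

/-- `b` is a sumsequence of `a`: `b_k = a_{F_k}` for finite index sets `F₁ < F₂ < ⋯`. -/
def IsSumseq {S : Type*} [AddSemigroup S] (a b : ℕ → S) : Prop :=
  ∃ F : ℕ → Finset ℕ, (∀ k, (F k).Nonempty) ∧
    (∀ k, FinsetLT (F k) (F (k + 1))) ∧ (∀ k, b k = ordsum a (F k))


/-
Fix an idempotent ultrafilter `U` containing every tail `FS(aₙ, aₙ₊₁, …)` and let `E` be the set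
of `x` with `x + y = x` for `U`-many `y`. If `E ∈ U`, choosing the blocks greedily inside `E`
gives a left-absorbing sumsequence, so `b_F = b_{min F}`. Otherwise one chooses the blocks inside
the Galvin–Glazer set `(Eᶜ)⋆`, avoiding for each pair `t, u` of earlier finite sums the `U`-small
set of `y` with `t + y = u` (it is small because `u ∉ E`); then `b_F ≠ b_G` is decided at the
largest index of `F ∪ G`. A sumsequence of a proper sequence is proper, which settles the
remaining comparisons with single terms.
-/

section

open Finset Filter

variable {S : Type*} [AddSemigroup S]

theorem ordsum_singleton (a : ℕ → S) (i : ℕ) : ordsum a {i} = a i := by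
  simp [ordsum, sort_singleton]

theorem ordsum_insert_of_lt (a : ℕ → S) {s : Finset ℕ} {i : ℕ} (hi : ∀ j ∈ s, i < j)
    (hs : s.Nonempty) : ordsum a (insert i s) = a i + ordsum a s := by
  have hsort : s.sort (· ≤ ·) ≠ [] := by simpa [← List.length_pos_iff] using hs.card_pos
  obtain ⟨j, l, hjl⟩ := List.exists_cons_of_ne_nil hsort
  rw [ordsum, ordsum, sort_insert _ (fun j hj => (hi j hj).le) fun h => (hi i h).false,
    hjl]
  simp only [List.foldl_cons]
  rw [← List.foldl_map (f := a) (g := (· + ·)), ← List.foldl_map (f := a) (g := (· + ·)),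
    List.foldl_assoc]

theorem ordsum_union (a : ℕ → S) {s t : Finset ℕ} (hst : FinsetLT s t) (hs : s.Nonempty)
    (ht : t.Nonempty) : ordsum a (s ∪ t) = ordsum a s + ordsum a t := by
  induction s using induction_on_min with
  | empty => exact absurd hs not_nonempty_empty
  | insert i s hi ih =>
    have hit : ∀ j ∈ s ∪ t, i < j := by
      simp only [mem_union]
      rintro j (hj | hj)
      exacts [hi j hj, hst i (mem_insert_self i s) j hj]
    rw [insert_union, ordsum_insert_of_lt a hit (ht.mono subset_union_right)]
    rcases s.eq_empty_or_nonempty with rfl | hs'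
    · rw [empty_union, insert_empty_eq, ordsum_singleton]
    · rw [ih (fun j hj k hk => hst j (mem_insert_of_mem hj) k hk) hs',
        ordsum_insert_of_lt a hi hs', add_assoc]

theorem ordsum_insert_of_gt (a : ℕ → S) {s : Finset ℕ} {i : ℕ} (hi : ∀ j ∈ s, j < i)
    (hs : s.Nonempty) : ordsum a (insert i s) = ordsum a s + a i := by
  rw [insert_eq, union_comm,
    ordsum_union a (fun j hj k hk => mem_singleton.1 hk ▸ hi j hj) hs
      (singleton_nonempty i), ordsum_singleton]

theorem FinsetLT.trans {F G H : Finset ℕ} (hFG : FinsetLT F G) (hGH : FinsetLT G H)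
    (hG : G.Nonempty) : FinsetLT F H := by
  obtain ⟨j, hj⟩ := hG
  exact fun i hi k hk => (hFG i hi j hj).trans (hGH j hj k hk)

theorem FinsetLT.biUnion {B : ℕ → Finset ℕ} (hB : ∀ k l, k < l → FinsetLT (B k) (B l))
    {F G : Finset ℕ} (hFG : FinsetLT F G) : FinsetLT (F.biUnion B) (G.biUnion B) := by
  intro i hi j hj
  obtain ⟨k, hk, hik⟩ := mem_biUnion.1 hi
  obtain ⟨l, hl, hjl⟩ := mem_biUnion.1 hj
  exact hB k l (hFG k hk l hl) i hik j hjl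

theorem finsetLT_of_lt {B : ℕ → Finset ℕ} (hne : ∀ k, (B k).Nonempty)
    (hsucc : ∀ k, FinsetLT (B k) (B (k + 1))) {k l : ℕ} (hkl : k < l) :
    FinsetLT (B k) (B l) := by
  induction l, hkl using Nat.le_induction with
  | base => exact hsucc k
  | succ l _ ih => exact ih.trans (hsucc l) (hne l)

theorem ordsum_biUnion (a : ℕ → S) {B : ℕ → Finset ℕ} (hne : ∀ k, (B k).Nonempty)
    (hB : ∀ k l, k < l → FinsetLT (B k) (B l)) {F : Finset ℕ} (hF : F.Nonempty) :
    ordsum (fun k => ordsum a (B k)) F = ordsum a (F.biUnion B) := by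
  induction F using induction_on_max with
  | empty => exact absurd hF not_nonempty_empty
  | insert n F hn ih =>
    rcases F.eq_empty_or_nonempty with rfl | hF'
    · simp [ordsum_singleton]
    · have hlt : FinsetLT (F.biUnion B) (B n) := by
        simpa using FinsetLT.biUnion hB (G := {n}) fun i hi j hj =>
          (mem_singleton.1 hj) ▸ hn i hi
      rw [ordsum_insert_of_gt _ hn hF', ih hF', biUnion_insert, union_comm,
        ordsum_union a hlt (hF'.biUnion fun k _ => hne k) (hne n)]

theorem IsSumseq.isProperSeq {a b : ℕ → S} (hab : IsSumseq a b) (ha : IsProperSeq a) :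
    IsProperSeq b := by
  obtain ⟨B, hne, hsucc, rfl⟩ : ∃ B : ℕ → Finset ℕ, (∀ k, (B k).Nonempty) ∧
      (∀ k, FinsetLT (B k) (B (k + 1))) ∧ b = fun k => ordsum a (B k) := by
    obtain ⟨B, hne, hsucc, hb⟩ := hab
    exact ⟨B, hne, hsucc, funext hb⟩
  have hB : ∀ k l, k < l → FinsetLT (B k) (B l) := fun k l => finsetLT_of_lt hne hsucc
  intro F G hF hG hFG
  rw [ordsum_biUnion a hne hB hF, ordsum_biUnion a hne hB hG]
  exact ha _ _ (hF.biUnion fun k _ => hne k) (hG.biUnion fun k _ => hne k) (hFG.biUnion hB)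

def IsLeftAbsorbing (b : ℕ → S) : Prop :=
  ∀ m n, m < n → b m + b n = b m

/-- `FS(b₀, …, b_{n-1}) ∩ (FS(b₀, …, b_{n-1}) + bₙ) = ∅` for every `n`. -/
def IsShiftSeparated (b : ℕ → S) : Prop :=
  ∀ n (F G : Finset ℕ), F ⊆ range n → G ⊆ range n → F.Nonempty → G.Nonempty →
    ordsum b F + b n ≠ ordsum b G

theorem IsProperSeq.apply_ne {b : ℕ → S} (hb : IsProperSeq b) {i j : ℕ} (hij : i < j) :
    b i ≠ b j := by
  simpa [ordsum_singleton] using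
    hb {i} {j} (singleton_nonempty i) (singleton_nonempty j) (by simpa [FinsetLT])

theorem IsLeftAbsorbing.ordsum_eq {b : ℕ → S} (hb : IsLeftAbsorbing b) {F : Finset ℕ}
    (hF : F.Nonempty) : ordsum b F = b (F.min' hF) := by
  induction F using induction_on_min with
  | empty => exact absurd hF not_nonempty_empty
  | insert m F hm ih =>
    rcases F.eq_empty_or_nonempty with rfl | hF'
    · simp [ordsum_singleton]
    · have hmin : m < F.min' hF' := hm _ (F.min'_mem hF')
      rw [ordsum_insert_of_lt b hm hF', ih hF', hb _ _ hmin, min'_insert m F hF',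
        min_eq_left hmin.le]

theorem IsLeftAbsorbing.ordsum_ne {b : ℕ → S} (hb : IsLeftAbsorbing b) (hp : IsProperSeq b)
    {F G : Finset ℕ} (hF : F.Nonempty) (hG : G.Nonempty) (hFG : Disjoint F G) :
    ordsum b F ≠ ordsum b G := by
  have hmin : F.min' hF ≠ G.min' hG := fun h =>
    disjoint_left.1 hFG (F.min'_mem hF) (h ▸ G.min'_mem hG)
  rw [hb.ordsum_eq hF, hb.ordsum_eq hG]
  rcases hmin.lt_or_gt with h | h
  exacts [hp.apply_ne h, (hp.apply_ne h).symm]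

theorem IsShiftSeparated.ordsum_ne_of_mem {b : ℕ → S} (hb : IsShiftSeparated b)
    (hp : IsProperSeq b) {F G : Finset ℕ} {n : ℕ} (hF : F.Nonempty) (hFG : Disjoint F G)
    (hn : n ∈ G) (hle : ∀ i ∈ F ∪ G, i ≤ n) : ordsum b F ≠ ordsum b G := by
  have hFn : F ⊆ range n := fun i hi => mem_range.2 <|
    (hle i (mem_union_left G hi)).lt_of_ne fun h => disjoint_left.1 hFG hi (h ▸ hn)
  have hGn : G.erase n ⊆ range n := fun i hi => mem_range.2 <|
    (hle i (mem_union_right F (mem_of_mem_erase hi))).lt_of_ne (ne_of_mem_erase hi)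
  rw [← insert_erase hn]
  rcases (G.erase n).eq_empty_or_nonempty with hG' | hG'
  · rw [hG', insert_empty_eq]
    exact hp F {n} hF (singleton_nonempty n)
      fun i hi j hj => mem_singleton.1 hj ▸ mem_range.1 (hFn hi)
  · rw [ordsum_insert_of_gt b (fun i hi => mem_range.1 (hGn hi)) hG']
    exact (hb n (G.erase n) F hGn hFn hG' hF).symm

theorem IsShiftSeparated.ordsum_ne {b : ℕ → S} (hb : IsShiftSeparated b) (hp : IsProperSeq b)
    {F G : Finset ℕ} (hF : F.Nonempty) (hG : G.Nonempty) (hFG : Disjoint F G) :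
    ordsum b F ≠ ordsum b G := by
  have hFG' : (F ∪ G).Nonempty := hF.mono subset_union_left
  have hle : ∀ i ∈ F ∪ G, i ≤ (F ∪ G).max' hFG' := fun i hi => le_max' _ i hi
  rcases mem_union.1 ((F ∪ G).max'_mem hFG') with hmax | hmax
  · exact (hb.ordsum_ne_of_mem hp hG hFG.symm hmax (by rwa [union_comm])).symm
  · exact hb.ordsum_ne_of_mem hp hF hFG hmax hle

theorem self_mem_FStail (a : ℕ → S) (n : ℕ) : a n ∈ FStail a n :=
  ⟨{n}, singleton_nonempty n, by simp, ordsum_singleton a n⟩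

theorem FStail_antitone (a : ℕ → S) : Antitone (FStail a) :=
  fun _ _ hmn _ ⟨F, hF, hFn, hs⟩ => ⟨F, hF, fun i hi => hmn.trans (hFn i hi), hs⟩

theorem exists_add_mem_FStail {a : ℕ → S} {n : ℕ} {x : S} (hx : x ∈ FStail a n) :
    ∃ m, ∀ y ∈ FStail a m, x + y ∈ FStail a n := by
  obtain ⟨F, hF, hFn, rfl⟩ := hx
  refine ⟨F.max' hF + 1, fun y ⟨G, hG, hGm, hy⟩ =>
    ⟨F ∪ G, hF.mono subset_union_left, ?_, ?_⟩⟩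
  · simp only [mem_union]
    rintro i (hi | hi)
    exacts [hFn i hi, (hFn _ (F.max'_mem hF)).trans (by have := hGm i hi; omega)]
  · have hFG : FinsetLT F G := fun i hi j hj =>
      Nat.lt_of_le_of_lt (F.le_max' i hi) (Nat.lt_of_succ_le (hGm j hj))
    rw [ordsum_union a hFG hF hG, hy]

/-- `prefixSums b n = FS(b₀, …, b_{n-1})`, built up one term at a time. -/
def prefixSums [DecidableEq S] (b : ℕ → S) : ℕ → Finset S
  | 0 => ∅
  | n + 1 => prefixSums b n ∪ insert (b n) ((prefixSums b n).image (· + b n))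

theorem ordsum_mem_prefixSums [DecidableEq S] (b : ℕ → S) {n : ℕ} {F : Finset ℕ}
    (hFn : F ⊆ range n) (hF : F.Nonempty) : ordsum b F ∈ prefixSums b n := by
  induction n generalizing F with
  | zero => simp_all
  | succ n ih =>
    simp only [prefixSums, mem_union, mem_insert, mem_image]
    by_cases hn : n ∈ F
    · have hlt : ∀ i ∈ F.erase n, i < n := fun i hi =>
        (Nat.lt_succ_iff.1 (mem_range.1 (hFn (mem_of_mem_erase hi)))).lt_of_ne
          (ne_of_mem_erase hi)
      rw [← insert_erase hn]
      rcases (F.erase n).eq_empty_or_nonempty with hF' | hF'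
      · simp [hF', ordsum_singleton]
      · exact Or.inr (Or.inr ⟨_, ih (fun i hi => mem_range.2 (hlt i hi)) hF',
          (ordsum_insert_of_gt b hlt hF').symm⟩)
    · refine Or.inl (ih (fun i hi => mem_range.2 ?_) hF)
      exact (Nat.lt_succ_iff.1 (mem_range.1 (hFn hi))).lt_of_ne fun h => hn (h ▸ hi)

theorem exists_isSumseq_forall_mem_allowed [DecidableEq S] (a : ℕ → S) {T : Set S}
    (allowed : Finset S → Set S)
    (hallowed : ∀ s : Finset S, ↑s ⊆ T → ∀ m, (allowed s ∩ FStail a m).Nonempty)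
    (hT : ∀ s : Finset S, ↑s ⊆ T → ∀ x ∈ allowed s, x ∈ T ∧ ∀ t ∈ s, t + x ∈ T) :
    ∃ b, IsSumseq a b ∧ ∀ n, b n ∈ allowed (prefixSums b n) := by
  have hpick : ∀ p : {s : Finset S // ↑s ⊆ T} × ℕ, ∃ B : Finset ℕ,
      B.Nonempty ∧ (∀ i ∈ B, p.2 ≤ i) ∧ ordsum a B ∈ allowed p.1 := by
    rintro ⟨⟨s, hs⟩, m⟩
    obtain ⟨x, hx, B, hB, hBm, rfl⟩ := hallowed s hs m
    exact ⟨B, hB, hBm, hx⟩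
  choose B hBne hBge hBallowed using hpick
  have hnext : ∀ p : {s : Finset S // ↑s ⊆ T} × ℕ, ↑(p.1.1 ∪
      insert (ordsum a (B p)) (p.1.1.image (· + ordsum a (B p)))) ⊆ T := by
    rintro ⟨⟨s, hs⟩, m⟩ y hy
    obtain ⟨hxT, htT⟩ := hT s hs _ (hBallowed (⟨s, hs⟩, m))
    simp only [coe_union, coe_insert, coe_image, Set.mem_union,
      Set.mem_insert_iff, Set.mem_image, mem_coe] at hy
    rcases hy with hy | rfl | ⟨t, ht, rfl⟩
    exacts [hs hy, hxT, htT t ht]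
  let next (p : {s : Finset S // ↑s ⊆ T} × ℕ) : {s : Finset S // ↑s ⊆ T} × ℕ :=
    (⟨_, hnext p⟩, (B p).max' (hBne p) + 1)
  let st (n : ℕ) := next^[n] (⟨∅, by simp⟩, 0)
  have hst : ∀ n, st (n + 1) = next (st n) := fun n => Function.iterate_succ_apply' _ _ _
  let b (n : ℕ) := ordsum a (B (st n))
  have hprefix : ∀ n, (st n).1.1 = prefixSums b n := by
    intro n
    induction n with
    | zero => rfl
    | succ n ih => rw [hst, prefixSums, ← ih]
  refine ⟨b, ⟨fun n => B (st n), fun n => hBne _, fun n i hi j hj => ?_, fun n => rfl⟩,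
    fun n => hprefix n ▸ hBallowed (st n)⟩
  have hj' := hBge (st (n + 1)) j hj
  rw [hst] at hj'
  exact Nat.lt_of_le_of_lt ((B (st n)).le_max' i hi) (Nat.lt_of_succ_le hj')

section Ultrafilter

attribute [local instance] Ultrafilter.add Ultrafilter.addSemigroup

theorem exists_idempotent_ultrafilter_forall_FStail_mem (a : ℕ → S) :
    ∃ U : Ultrafilter S, U + U = U ∧ ∀ n, FStail a n ∈ U := by
  let K : Set (Ultrafilter S) := ⋂ n, {U | FStail a n ∈ U}
  have hK : K.Nonempty :=
    IsCompact.nonempty_iInter_of_sequence_nonempty_isCompact_isClosed _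
      (fun n U hU => mem_of_superset hU (FStail_antitone a n.le_succ))
      (fun n => ⟨pure (a n), Ultrafilter.mem_pure.2 (self_mem_FStail a n)⟩)
      (ultrafilter_isClosed_basic _).isCompact fun n => ultrafilter_isClosed_basic _
  have hadd : ∀ U ∈ K, ∀ V ∈ K, U + V ∈ K := by
    intro U hU V hV
    refine Set.mem_iInter.2 fun n => ?_
    show ∀ᶠ x in (U : Filter S), ∀ᶠ y in (V : Filter S), x + y ∈ FStail a n
    filter_upwards [Set.mem_iInter.1 hU n] with x hx
    obtain ⟨m, hm⟩ := exists_add_mem_FStail hx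
    filter_upwards [Set.mem_iInter.1 hV m] using hm
  obtain ⟨U, hU, hidem⟩ := exists_idempotent_in_compact_add_subsemigroup
    Ultrafilter.continuous_add_left K hK
    (isClosed_iInter fun n => ultrafilter_isClosed_basic _).isCompact hadd
  exact ⟨U, hidem, Set.mem_iInter.1 hU⟩

variable {U : Ultrafilter S}

theorem eventually_eventually_add_of_idempotent (hU : U + U = U) {p : S → Prop}
    (hp : ∀ᶠ x in (U : Filter S), p x) :
    ∀ᶠ x in (U : Filter S), ∀ᶠ y in (U : Filter S), p (x + y) := by
  rwa [← hU] at hp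

def absorbingSet (U : Ultrafilter S) : Set S :=
  {x | ∀ᶠ y in (U : Filter S), x + y = x}

theorem mem_absorbingSet_of_eventually_add_eq (hU : U + U = U) {s t : S}
    (h : ∀ᶠ y in (U : Filter S), t + y = s) : s ∈ absorbingSet U := by
  obtain ⟨x, hx, hxy⟩ := (h.and (eventually_eventually_add_of_idempotent hU h)).exists
  filter_upwards [hxy] with y hy
  rwa [← add_assoc, hx] at hy

/-- The set `A⋆` of the Galvin–Glazer proof of Hindman's theorem. -/
def starSet (U : Ultrafilter S) (A : Set S) : Set S :=
  {x | x ∈ A ∧ ∀ᶠ y in (U : Filter S), x + y ∈ A}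

theorem starSet_mem (hU : U + U = U) {A : Set S} (hA : A ∈ U) : starSet U A ∈ U :=
  Eventually.and hA (eventually_eventually_add_of_idempotent hU hA)

theorem eventually_add_mem_starSet (hU : U + U = U) {A : Set S} {x : S}
    (hx : x ∈ starSet U A) : ∀ᶠ y in (U : Filter S), x + y ∈ starSet U A := by
  filter_upwards [hx.2, eventually_eventually_add_of_idempotent hU hx.2] with y hy hyz
  exact ⟨hy, by simpa only [add_assoc] using hyz⟩

theorem exists_isSumseq_isLeftAbsorbing (a : ℕ → S) (hU : ∀ m, FStail a m ∈ U)
    (hE : absorbingSet U ∈ U) : ∃ b, IsSumseq a b ∧ IsLeftAbsorbing b := by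
  classical
  obtain ⟨b, hab, hb⟩ := exists_isSumseq_forall_mem_allowed a (T := absorbingSet U)
    (fun s => absorbingSet U ∩ {y | ∀ t ∈ s, t + y = t})
    (fun s hs m => Ultrafilter.nonempty_of_mem <| inter_mem
      (inter_mem hE ((eventually_all_finset s).2 fun t ht => hs ht)) (hU m))
    (fun s hs x hx => ⟨hx.1, fun t ht => (hx.2 t ht).symm ▸ hs ht⟩)
  refine ⟨b, hab, fun m n hmn => (hb n).2 (b m) ?_⟩
  simpa [ordsum_singleton] using
    ordsum_mem_prefixSums b (n := n) (by simpa using hmn) (singleton_nonempty m)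

theorem exists_isSumseq_isShiftSeparated (a : ℕ → S) (hidem : U + U = U)
    (hU : ∀ m, FStail a m ∈ U) (hE : absorbingSet U ∉ U) :
    ∃ b, IsSumseq a b ∧ IsShiftSeparated b := by
  classical
  let A := starSet U (absorbingSet U)ᶜ
  have hA : A ∈ U := starSet_mem hidem (Ultrafilter.compl_mem_iff_notMem.2 hE)
  have hlarge : ∀ s : Finset S, ↑s ⊆ A →
      A ∩ {y | ∀ t ∈ s, t + y ∈ A} ∩ {y | ∀ t ∈ s, ∀ u ∈ s, t + y ≠ u} ∈ U := by
    intro s hs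
    refine inter_mem (inter_mem hA ?_) ?_
    · exact (eventually_all_finset s).2 fun t ht =>
        eventually_add_mem_starSet hidem (hs ht)
    · -- if `t + y = u` for `U`-many `y`, then `u` would absorb `U`-many `y`
      refine (eventually_all_finset s).2 fun t _ => (eventually_all_finset s).2
        fun u hu => Ultrafilter.eventually_not.2 fun h => ?_
      exact (hs hu).1 (mem_absorbingSet_of_eventually_add_eq hidem h)
  obtain ⟨b, hab, hb⟩ := exists_isSumseq_forall_mem_allowed a (T := A)
    (fun s => A ∩ {y | ∀ t ∈ s, t + y ∈ A} ∩ {y | ∀ t ∈ s, ∀ u ∈ s, t + y ≠ u})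
    (fun s hs m => Ultrafilter.nonempty_of_mem (inter_mem (hlarge s hs) (hU m)))
    (fun s _ x hx => hx.1)
  exact ⟨b, hab, fun n F G hF hG hFne hGne => (hb n).2 _ (ordsum_mem_prefixSums b hF hFne) _
    (ordsum_mem_prefixSums b hG hGne)⟩

theorem exists_isSumseq_isLeftAbsorbing_or_isShiftSeparated (a : ℕ → S) :
    ∃ b, IsSumseq a b ∧ (IsLeftAbsorbing b ∨ IsShiftSeparated b) := by
  obtain ⟨U, hidem, hU⟩ := exists_idempotent_ultrafilter_forall_FStail_mem a
  by_cases hE : absorbingSet U ∈ U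
  · obtain ⟨b, hab, hb⟩ := exists_isSumseq_isLeftAbsorbing a hU hE
    exact ⟨b, hab, .inl hb⟩
  · obtain ⟨b, hab, hb⟩ := exists_isSumseq_isShiftSeparated a hidem hU hE
    exact ⟨b, hab, .inr hb⟩

end Ultrafilter

end

theorem stmt9 {S : Type*} [AddSemigroup S] (a : ℕ → S) (ha : IsProperSeq a) :
    ∃ b : ℕ → S, IsSumseq a b ∧
      ∀ F G : Finset ℕ, F.Nonempty → G.Nonempty → Disjoint F G →
        ordsum b F ≠ ordsum b G := by
  obtain ⟨b, hab, hb⟩ := exists_isSumseq_isLeftAbsorbing_or_isShiftSeparated a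
  have hp : IsProperSeq b := hab.isProperSeq ha
  refine ⟨b, hab, fun F G hF hG hFG => ?_⟩
  rcases hb with hb | hb
  · exact hb.ordsum_ne hp hF hG hFG
  · exact hb.ordsum_ne hp hF hG hFG
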